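/- Let k ≥ 1 and let L_k be the ladder graph with vertices a₁,…,a_k, b₁,…,b_k and edges aᵢbᵢ for 1 ≤ i ≤ k and aᵢa_{i+1}, bᵢb_{i+1} for 1 ≤ i < k. For every 2-subcoloring μ of L_k with μ(a₁) = μ(b₁), one has μ(aᵢ) = μ(bᵢ) for all 1 ≤ i ≤ k and μ(aᵢ) ≠ μ(a_{i+1}) for all 1 ≤ i < k (every rung is monochromatic and the two colors alternate along the ladder). -/

import Mathlib

/-- A `k`-subcoloring of a simple graph `G`: every color class induces a
disjoint union of cliques. -/
def IsSubcoloring {V : Type*} {k : ℕ} (G : SimpleGraph V) (μ : V → Fin k) : Prop :=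
  ∀ u v w : V, μ u = μ v → μ v = μ w → G.Adj u v → G.Adj v w → u ≠ w → G.Adj u w

/-- The ladder graph of length `k`: vertices `(i, false) = aᵢ` and `(i, true) = bᵢ`
(0-indexed), with rung edges `aᵢbᵢ` and path edges `aᵢa_{i+1}`, `bᵢb_{i+1}`. -/
def ladder (k : ℕ) : SimpleGraph (Fin k × Bool) where
  Adj p q := (p.1 = q.1 ∧ p.2 ≠ q.2) ∨
    (((p.1 : ℕ) + 1 = (q.1 : ℕ) ∨ (q.1 : ℕ) + 1 = (p.1 : ℕ)) ∧ p.2 = q.2)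
  symm := by
    constructor
    intro p q h
    rcases h with ⟨h1, h2⟩ | ⟨h1, h2⟩
    · exact Or.inl ⟨h1.symm, h2.symm⟩
    · exact Or.inr ⟨h1.symm, h2.symm⟩
  loopless := by
    constructor
    intro p h
    rcases h with ⟨_, h2⟩ | ⟨h1, _⟩
    · exact h2 rfl
    · rcases h1 with h | h <;> omega


lemma fin2_eq_of_ne : ∀ x y z : Fin 2, x ≠ y → x ≠ z → y = z := by decide

/-- In any 2-subcoloring of the ladder graph in which the first rung is
monochromatic, every rung is monochromatic and the two colors alternate
along the ladder. -/
theorem ladder_two_subcoloring_propagation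
    (k : ℕ) (hk : 1 ≤ k) (μ : Fin k × Bool → Fin 2)
    (hμ : IsSubcoloring (ladder k) μ)
    (h0 : μ (⟨0, by omega⟩, false) = μ (⟨0, by omega⟩, true)) :
    (∀ i : Fin k, μ (i, false) = μ (i, true)) ∧
      (∀ i j : Fin k, (i : ℕ) + 1 = (j : ℕ) → μ (i, false) ≠ μ (j, false)) := by
  have step : ∀ n (h : n < k) (h' : n + 1 < k),
      μ (⟨n, h⟩, false) = μ (⟨n, h⟩, true) →
      μ (⟨n + 1, h'⟩, false) ≠ μ (⟨n, h⟩, false) ∧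
      μ (⟨n + 1, h'⟩, true) ≠ μ (⟨n, h⟩, false) := by
    intro n h h' hm
    constructor
    · intro he
      have adj1 : (ladder k).Adj (⟨n + 1, h'⟩, false) (⟨n, h⟩, false) := by
        right; exact ⟨Or.inr rfl, rfl⟩
      have adj2 : (ladder k).Adj (⟨n, h⟩, false) (⟨n, h⟩, true) := by
        left; exact ⟨rfl, by simp⟩
      have hadj := hμ _ _ _ he hm adj1 adj2 (by simp)
      rcases hadj with ⟨h1, h2⟩ | ⟨h1, h2⟩
      · simp only [Fin.mk.injEq] at h1; omega
      · simp at h2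
    · intro he
      have adj1 : (ladder k).Adj (⟨n + 1, h'⟩, true) (⟨n, h⟩, true) := by
        right; exact ⟨Or.inr rfl, rfl⟩
      have adj2 : (ladder k).Adj (⟨n, h⟩, true) (⟨n, h⟩, false) := by
        left; exact ⟨rfl, by simp⟩
      have hadj := hμ _ _ _ (by rw [he, hm]) hm.symm adj1 adj2 (by simp)
      rcases hadj with ⟨h1, h2⟩ | ⟨h1, h2⟩
      · simp only [Fin.mk.injEq] at h1; omega
      · simp at h2
  have mono : ∀ n (h : n < k), μ (⟨n, h⟩, false) = μ (⟨n, h⟩, true) := by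
    intro n
    induction n with
    | zero => intro h; exact h0
    | succ m ih =>
      intro h
      have hm := ih (by omega)
      obtain ⟨h1, h2⟩ := step m (by omega) h hm
      exact fin2_eq_of_ne _ _ _ (Ne.symm h1) (Ne.symm h2)
  refine ⟨fun i => mono i.1 i.2, fun i j hij => ?_⟩
  have hj : j = ⟨i.1 + 1, by omega⟩ := Fin.ext hij.symm
  have := (step i.1 i.2 (by omega) (mono i.1 i.2)).1
  rw [hj]
  exact fun hc => this hc.symm
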